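/- arXiv:2601.23128 — 4 statements merged into one kernel-verified Lean document; each statement's English description precedes it below -/
import Mathlib

section
/- Let n and m be positive integers, set N = n + m, and let (Y_1, …, Y_N) be real random variables whose joint law is exchangeable and which almost surely have pairwise distinct values. For i ∈ {1, …, n} define R_i^c = #{j ∈ {1, …, n} : Y_j ≤ Y_i} (the relative rank among the first n coordinates) and R_i^t = #{j ∈ {1, …, m} : Y_{n+j} ≤ Y_i} (the number of the last m coordinates with value below Y_i). Then for every i ∈ {1, …, n}, every r ∈ {1, …, n} with P(R_i^c = r) > 0, and every k ∈ {0, …, m}, the conditional probability satisfies P(R_i^t = k | R_i^c = r) = binom(r+k-1, k) · binom(N-r-k, m-k) / binom(N, m); that is, conditionally on R_i^c = r, the variable R_i^t follows the Negative Hypergeometric distribution with parameters (N, m, r). -/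
/-!
If `Y` is exchangeable and a.s. injective, then for a fixed index `j` and a set `S` of other
indices, the probability that exactly the coordinates in `S` lie below `Y j` depends only on
`#S`. A.s. exactly one index has exactly `s` others below it, and by exchangeability every index
is equally likely to be that one, so `P(#{l | Y l < Y j} = s) = 1 / N`, and hence
`P({l | Y l < Y j} = S) = 1 / (N * choose (N - 1) #S)`. The joint event
`R_i^c = r, R_i^t = k` is the union of `choose (n - 1) (r - 1) * choose m k` such events with
`#S = r - 1 + k`, while `R_i^c = r` has probability `1 / n` by the same argument applied to the
first `n` coordinates; the quotient simplifies to the Negative Hypergeometric mass.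
-/

open MeasureTheory ProbabilityTheory Finset
open scoped ENNReal

theorem Nat.choose_mul_choose_mul_eq_negHypergeometric {n m r k : ℕ} (hr : 1 ≤ r) (hrn : r ≤ n)
    (hk : k ≤ m) :
    (n + m).choose m * (n * ((n - 1).choose (r - 1) * m.choose k))
      = (n + m) * (n + m - 1).choose (r - 1 + k)
        * ((r + k - 1).choose k * (n + m - r - k).choose (m - k)) := by
  -- With `r = a + 1`, `n = a + 1 + b`, `m = k + d` no subtraction truncates and every
  -- binomial takes the form `(x + y).choose x`, which `Nat.cast_add_choose` turns into factorials.
  obtain ⟨a, rfl⟩ : ∃ a, r = a + 1 := ⟨r - 1, by omega⟩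
  obtain ⟨b, rfl⟩ : ∃ b, n = a + 1 + b := ⟨n - (a + 1), by omega⟩
  obtain ⟨d, rfl⟩ : ∃ d, m = k + d := ⟨m - k, by omega⟩
  rw [show a + 1 + b - 1 = a + b by omega, show a + 1 - 1 = a by omega,
    show a + 1 + k - 1 = k + a by omega, show a + 1 + b + (k + d) - (a + 1) - k = d + b by omega,
    show k + d - k = d by omega, show a + 1 + b + (k + d) = k + d + (a + 1 + b) by omega,
    show k + d + (a + 1 + b) - 1 = a + k + (b + d) by omega, ← Nat.cast_inj (R := ℚ)]
  push_cast
  simp only [Nat.cast_add_choose]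
  rw [show k + d + (a + 1 + b) = a + k + (b + d) + 1 by omega,
    show a + 1 + b = a + b + 1 by omega, Nat.add_comm k a, Nat.add_comm d b]
  push_cast [Nat.factorial_succ]
  field_simp
  ring

theorem Finset.card_filter_powerset_card_inter {α : Type*} [DecidableEq α] {C T : Finset α}
    (h : Disjoint C T) (a b : ℕ) :
    #((C ∪ T).powerset.filter (fun S => #(S ∩ C) = a ∧ #(S ∩ T) = b))
      = (#C).choose a * (#T).choose b := by
  have hsplit : ∀ {A B}, A ⊆ C → B ⊆ T → (A ∪ B) ∩ C = A ∧ (A ∪ B) ∩ T = B := by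
    intro A B hA hB
    refine ⟨?_, ?_⟩
    · rw [union_inter_distrib_right, inter_eq_left.2 hA,
        disjoint_iff_inter_eq_empty.1 (h.symm.mono_left hB), union_empty]
    · rw [union_inter_distrib_right, inter_eq_left.2 hB,
        disjoint_iff_inter_eq_empty.1 (h.mono_left hA), empty_union]
  rw [← card_powersetCard a C, ← card_powersetCard b T, ← card_product]
  refine card_nbij' (fun S => (S ∩ C, S ∩ T)) (fun p => p.1 ∪ p.2) ?_ ?_ ?_ ?_
  · intro S hS
    simp only [coe_filter, mem_powerset, Set.mem_ofPred_eq] at hS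
    simp only [coe_product, Set.mem_prod, mem_coe, mem_powersetCard]
    exact ⟨⟨inter_subset_right, hS.2.1⟩, inter_subset_right, hS.2.2⟩
  · rintro ⟨A, B⟩ hAB
    simp only [coe_product, Set.mem_prod, mem_coe, mem_powersetCard] at hAB
    obtain ⟨hAC, hBT⟩ := hsplit hAB.1.1 hAB.2.1
    simp only [coe_filter, mem_powerset, Set.mem_ofPred_eq]
    exact ⟨union_subset_union hAB.1.1 hAB.2.1, by rw [hAC, hAB.1.2], by rw [hBT, hAB.2.2]⟩
  · intro S hS
    simp only [coe_filter, mem_powerset, Set.mem_ofPred_eq] at hS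
    exact (inter_union_distrib_left S C T).symm.trans (inter_eq_left.2 hS.1)
  · rintro ⟨A, B⟩ hAB
    simp only [coe_product, Set.mem_prod, mem_coe, mem_powersetCard] at hAB
    obtain ⟨hAC, hBT⟩ := hsplit hAB.1.1 hAB.2.1
    simp only [hAC, hBT]

theorem Equiv.Perm.exists_fix_map_finset_eq {ι : Type*} [Fintype ι] [DecidableEq ι] {j : ι}
    {S S' : Finset ι} (hS : j ∉ S) (hS' : j ∉ S') (h : #S = #S') :
    ∃ π : Equiv.Perm ι, π j = j ∧ S.map π.toEmbedding = S' := by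
  obtain ⟨σ, hσ⟩ := Equiv.Perm.exists_map_finset_eq (S.subtype (· ≠ j)) (S'.subtype (· ≠ j))
    (by simpa [card_subtype, filter_true_of_mem, hS, hS'] using h)
  refine ⟨σ.viaFintypeEmbedding (Function.Embedding.subtype _),
    Equiv.Perm.viaFintypeEmbedding_apply_notMem_range _ _ (by simp), ?_⟩
  rw [← subtype_map_of_mem (p := (· ≠ j)) (fun x hx => ne_of_mem_of_not_mem hx hS),
    ← subtype_map_of_mem (p := (· ≠ j)) (fun x hx => ne_of_mem_of_not_mem hx hS'), ← hσ,
    map_map, map_map]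
  congr 1
  ext x
  simpa using Equiv.Perm.viaFintypeEmbedding_apply_image σ (Function.Embedding.subtype _) x

theorem Fin.castAdd_ne_natAdd {n m : ℕ} (a : Fin n) (b : Fin m) :
    Fin.castAdd m a ≠ Fin.natAdd n b :=
  Fin.ne_of_val_ne (by simp only [Fin.val_castAdd, Fin.val_natAdd]; omega)

theorem ProbabilityTheory.cond_map_apply {Ω α : Type*} [MeasurableSpace Ω] [MeasurableSpace α]
    {μ : Measure Ω} {Y : Ω → α} (hY : Measurable Y) {s t : Set α} (hs : MeasurableSet s)
    (ht : MeasurableSet t) : (μ.map Y)[|s] t = μ[|Y ⁻¹' s] (Y ⁻¹' t) := by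
  rw [cond_apply hs, cond_apply (hY hs), Measure.map_apply hY hs,
    Measure.map_apply hY (hs.inter ht), Set.preimage_inter]

namespace RankStatistics

variable {ι κ : Type*}

def IsExchangeable {α : Type*} [MeasurableSpace α] (ν : Measure (ι → α)) : Prop :=
  ∀ π : Equiv.Perm ι, ν.map (fun y => y ∘ π) = ν

section Exchangeable

variable {α : Type*} [MeasurableSpace α] {ν : Measure (ι → α)}

theorem IsExchangeable.measure_preimage_comp (hν : IsExchangeable ν) (π : Equiv.Perm ι)
    {s : Set (ι → α)} (hs : MeasurableSet s) : ν ((fun y => y ∘ π) ⁻¹' s) = ν s := by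
  rw [← Measure.map_apply (by fun_prop) hs, hν π]

theorem IsExchangeable.map_comp_embedding [Fintype κ] [DecidableEq ι] (hν : IsExchangeable ν)
    (e : κ ↪ ι) : IsExchangeable (ν.map (fun y => y ∘ e)) := by
  intro σ
  conv_rhs => rw [← hν (σ.viaFintypeEmbedding e)]
  rw [Measure.map_map (by fun_prop) (by fun_prop), Measure.map_map (by fun_prop) (by fun_prop)]
  congr 1
  ext y i
  simp

end Exchangeable

theorem measurableSet_injective [Countable ι] :
    MeasurableSet {y : ι → ℝ | Function.Injective y} := by
  simp only [Function.Injective, Set.ofPred_forall]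
  exact MeasurableSet.iInter fun a => MeasurableSet.iInter fun b => measurableSet_setOfPred.2 <|
    (measurableSet_setOfPred.1 (measurableSet_eq_fun (measurable_pi_apply a)
      (measurable_pi_apply b))).imp measurable_const

theorem ae_injective_map_comp_embedding [Countable κ] {ν : Measure (ι → ℝ)}
    (hinj : ∀ᵐ y ∂ν, Function.Injective y) (e : κ ↪ ι) :
    ∀ᵐ z ∂ν.map (fun y => y ∘ e), Function.Injective z :=
  (ae_map_iff (by fun_prop : Measurable fun y : ι → ℝ => y ∘ e).aemeasurable
    measurableSet_injective).2 (hinj.mono fun _ hy => hy.comp e.injective)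

variable [Fintype ι] [DecidableEq ι]

noncomputable def below (y : ι → ℝ) (j : ι) : Finset ι :=
  (univ.erase j).filter (fun l => y l ≤ y j)

theorem mem_below {y : ι → ℝ} {j l : ι} : l ∈ below y j ↔ l ≠ j ∧ y l ≤ y j := by
  simp [below]

theorem below_subset (y : ι → ℝ) (j : ι) : below y j ⊆ univ.erase j := filter_subset _ _

theorem notMem_below (y : ι → ℝ) (j : ι) : j ∉ below y j := fun h => (mem_below.1 h).1 rfl

theorem map_below_comp [Fintype κ] [DecidableEq κ] (y : ι → ℝ) (e : κ ↪ ι) (i : κ) :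
    (below (y ∘ e) i).map e = below y (e i) ∩ univ.map e := by
  ext l
  simp only [mem_map, mem_inter, mem_below, mem_univ, true_and]
  constructor
  · rintro ⟨a, ⟨ha, hle⟩, rfl⟩
    exact ⟨⟨fun h => ha (e.injective h), hle⟩, a, rfl⟩
  · rintro ⟨⟨hl, hle⟩, a, rfl⟩
    exact ⟨a, ⟨fun h => hl (h ▸ rfl), hle⟩, rfl⟩

theorem map_below_comp_perm (y : ι → ℝ) (π : Equiv.Perm ι) (j : ι) :
    (below (y ∘ π) j).map π.toEmbedding = below y (π j) := by
  simpa using map_below_comp y π.toEmbedding j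

theorem card_below_comp_perm (y : ι → ℝ) (π : Equiv.Perm ι) (j : ι) :
    #(below (y ∘ π) j) = #(below y (π j)) := by
  rw [← map_below_comp_perm, card_map]

theorem card_below_comp_embedding [Fintype κ] [DecidableEq κ] (y : ι → ℝ) (e : κ ↪ ι) (i : κ) :
    #(below (y ∘ e) i) = #(below y (e i) ∩ (univ.map e).erase (e i)) := by
  rw [← card_map e, map_below_comp, inter_erase, erase_eq_of_notMem fun h =>
    notMem_below y (e i) (mem_inter.1 h).1]

theorem card_filter_le_eq_card_below_add_one (y : ι → ℝ) (j : ι) :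
    #(univ.filter (fun l => y l ≤ y j)) = #(below y j) + 1 := by
  rw [below, filter_erase, card_erase_add_one (by simp)]

theorem card_filter_comp_le_eq_card_below_inter [Fintype κ] (y : ι → ℝ) (e : κ ↪ ι) {j : ι}
    (hj : j ∉ univ.map e) :
    #(univ.filter (fun l => y (e l) ≤ y j)) = #(below y j ∩ univ.map e) := by
  rw [← card_map e]
  congr 1
  ext l
  simp only [mem_map, mem_filter, mem_univ, true_and, mem_inter, mem_below]
  constructor
  · rintro ⟨a, hle, rfl⟩
    exact ⟨⟨fun h => hj (h ▸ mem_map_of_mem e (mem_univ a)), hle⟩, a, rfl⟩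
  · rintro ⟨⟨_, hle⟩, a, rfl⟩
    exact ⟨a, hle, rfl⟩

theorem card_below_lt_card_below {y : ι → ℝ} {j j' : ι} (h : y j < y j') :
    #(below y j) < #(below y j') := by
  refine card_lt_card ⟨fun l hl => ?_, fun hsub => notMem_below y j (hsub ?_)⟩
  · obtain ⟨-, hle⟩ := mem_below.1 hl
    exact mem_below.2 ⟨fun h' => (h' ▸ hle).not_gt h, hle.trans h.le⟩
  · exact mem_below.2 ⟨fun h' => (h' ▸ h).false, h.le⟩

theorem card_below_injective {y : ι → ℝ} (hy : Function.Injective y) :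
    Function.Injective (fun j => #(below y j)) := by
  intro j j' h
  rcases lt_trichotomy (y j) (y j') with hlt | heq | hlt
  · exact absurd h (card_below_lt_card_below hlt).ne
  · exact hy heq
  · exact absurd h (card_below_lt_card_below hlt).ne'

theorem exists_card_below_eq {y : ι → ℝ} (hy : Function.Injective y) {s : ℕ}
    (hs : s < Fintype.card ι) : ∃ j, #(below y j) = s := by
  have hrange : univ.image (fun j => #(below y j)) = range (Fintype.card ι) := by
    refine eq_of_subset_of_card_le (fun x hx => ?_) ?_
    · obtain ⟨j, -, rfl⟩ := mem_image.1 hx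
      have := card_le_card (below_subset y j)
      rw [card_erase_of_mem (mem_univ j), card_univ] at this
      exact mem_range.2 (by have := Fintype.card_pos_iff.2 ⟨j⟩; omega)
    · rw [card_image_of_injective _ (card_below_injective hy), card_range, card_univ]
  obtain ⟨j, -, hj⟩ := mem_image.1 (hrange ▸ mem_range.2 hs : s ∈ univ.image _)
  exact ⟨j, hj⟩

theorem measurableSet_below_eq (j : ι) (S : Finset ι) :
    MeasurableSet {y : ι → ℝ | below y j = S} := by
  simp only [Finset.ext_iff, mem_below, Set.ofPred_forall]
  exact MeasurableSet.iInter fun l => measurableSet_setOfPred.2 <|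
    (measurable_const.and (measurableSet_setOfPred.1 (measurableSet_le (measurable_pi_apply l)
      (measurable_pi_apply j)))).iff measurable_const

theorem measurableSet_setOf_below (j : ι) (P : Finset ι → Prop) :
    MeasurableSet {y : ι → ℝ | P (below y j)} := by
  have : {y : ι → ℝ | P (below y j)} = ⋃ S ∈ {S | P S}, {y | below y j = S} := by
    ext y
    simp
  rw [this]
  exact MeasurableSet.biUnion (Set.to_countable _) fun S _ => measurableSet_below_eq j S

theorem measure_below_mem (ν : Measure (ι → ℝ)) (j : ι) (𝒮 : Finset (Finset ι)) :
    ν {y | below y j ∈ 𝒮} = ∑ S ∈ 𝒮, ν {y | below y j = S} := by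
  rw [← measure_biUnion_finset (fun S _ S' _ h => Set.disjoint_left.2 fun y h1 h2 =>
    h (h1.symm.trans h2)) fun S _ => measurableSet_below_eq j S]
  congr 1
  ext y
  simp

variable {ν : Measure (ι → ℝ)}

theorem IsExchangeable.measure_card_below_eq_inv_card [IsProbabilityMeasure ν]
    (hν : IsExchangeable ν) (hinj : ∀ᵐ y ∂ν, Function.Injective y) (j : ι) {s : ℕ}
    (hs : s < Fintype.card ι) :
    ν {y | #(below y j) = s} = (Fintype.card ι : ℝ≥0∞)⁻¹ := by
  have hsymm : ∀ j', ν {y | #(below y j') = s} = ν {y | #(below y j) = s} := by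
    intro j'
    rw [← hν.measure_preimage_comp (Equiv.swap j j')
      (measurableSet_setOf_below j' (fun S => #S = s))]
    congr 1
    ext y
    simp [card_below_comp_perm]
  have hsum : ∑ j', ν {y | #(below y j') = s} = 1 := by
    have hcover : ∀ᵐ y ∂ν, y ∈ ⋃ j' ∈ univ, {y | #(below y j') = s} :=
      hinj.mono fun y hy => by simpa using exists_card_below_eq hy hs
    rw [← measure_biUnion_finset₀ ?_ fun j' _ =>
      (measurableSet_setOf_below j' (fun S => #S = s)).nullMeasurableSet,
      measure_congr (ae_eq_univ.2 (ae_iff.1 hcover)), measure_univ]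
    intro j₁ _ j₂ _ hne
    have hnull : ν {y | ¬ Function.Injective y} = 0 := ae_iff.1 hinj
    refine measure_mono_null (fun y hy => ?_) hnull
    exact fun hy_inj => hne (card_below_injective hy_inj (hy.1.trans hy.2.symm))
  rw [sum_congr rfl fun j' _ => hsymm j', sum_const, card_univ, nsmul_eq_mul] at hsum
  exact ENNReal.eq_inv_of_mul_eq_one_left (by rwa [mul_comm])

theorem IsExchangeable.measure_below_eq_of_card_eq (hν : IsExchangeable ν) {j : ι}
    {S S' : Finset ι} (hS : j ∉ S) (hS' : j ∉ S') (h : #S = #S') :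
    ν {y | below y j = S} = ν {y | below y j = S'} := by
  obtain ⟨π, hπj, hπS⟩ := Equiv.Perm.exists_fix_map_finset_eq hS' hS h.symm
  rw [← hν.measure_preimage_comp π (measurableSet_below_eq j S')]
  congr 1
  ext y
  simp only [Set.mem_preimage, Set.mem_ofPred_eq]
  rw [← (map_injective π.toEmbedding).eq_iff (a := below (y ∘ π) j), map_below_comp_perm, hπj,
    hπS]

theorem IsExchangeable.measure_below_eq [IsProbabilityMeasure ν] (hν : IsExchangeable ν)
    (hinj : ∀ᵐ y ∂ν, Function.Injective y) {j : ι} {S : Finset ι} (hS : j ∉ S) :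
    ν {y | below y j = S}
      = ((Fintype.card ι : ℝ≥0∞) * (Fintype.card ι - 1).choose #S)⁻¹ := by
  have hlt : #S < Fintype.card ι := card_lt_univ_of_notMem hS
  have h := hν.measure_card_below_eq_inv_card hinj j hlt
  have hevent : {y | #(below y j) = #S} = {y | below y j ∈ (univ.erase j).powersetCard #S} := by
    ext y
    simp [mem_powersetCard, below_subset]
  rw [hevent, measure_below_mem, sum_congr rfl fun S' hS' => hν.measure_below_eq_of_card_eq
    (fun hj => by simpa using (mem_powersetCard.1 hS').1 hj) hS (mem_powersetCard.1 hS').2,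
    sum_const, card_powersetCard, card_erase_of_mem (mem_univ j), card_univ, nsmul_eq_mul] at h
  have hchoose : ((Fintype.card ι - 1).choose #S : ℝ≥0∞) ≠ 0 := by
    exact_mod_cast (Nat.choose_pos (by omega)).ne'
  rw [ENNReal.mul_inv (by simp) (by simp), ← h, mul_comm, ← mul_assoc,
    ENNReal.inv_mul_cancel hchoose (by simp), one_mul]

theorem IsExchangeable.measure_card_below_inter_eq [IsProbabilityMeasure ν]
    (hν : IsExchangeable ν) (hinj : ∀ᵐ y ∂ν, Function.Injective y) {j : ι} {C T : Finset ι}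
    (hCT : Disjoint C T) (hunion : C ∪ T = univ.erase j) (a b : ℕ) :
    ν {y | #(below y j ∩ C) = a ∧ #(below y j ∩ T) = b}
      = (((#C).choose a * (#T).choose b : ℕ) : ℝ≥0∞)
        * ((Fintype.card ι : ℝ≥0∞) * (Fintype.card ι - 1).choose (a + b))⁻¹ := by
  set 𝒮 := (C ∪ T).powerset.filter (fun S => #(S ∩ C) = a ∧ #(S ∩ T) = b)
  have hevent : {y | #(below y j ∩ C) = a ∧ #(below y j ∩ T) = b} = {y | below y j ∈ 𝒮} := by
    ext y
    simp [𝒮, hunion, below_subset]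
  have h𝒮 : ∀ S ∈ 𝒮, j ∉ S ∧ #S = a + b := by
    intro S hS
    simp only [𝒮, mem_filter, mem_powerset] at hS
    refine ⟨fun hj => by simpa [hunion] using hS.1 hj, ?_⟩
    rw [← hS.2.1, ← hS.2.2,
      ← card_union_of_disjoint (hCT.mono inter_subset_right inter_subset_right),
      ← inter_union_distrib_left, inter_eq_left.2 hS.1]
  rw [hevent, measure_below_mem, sum_congr rfl fun S hS => hν.measure_below_eq hinj (h𝒮 S hS).1,
    sum_congr rfl fun S hS => by rw [(h𝒮 S hS).2], sum_const, card_filter_powerset_card_inter hCT,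
    nsmul_eq_mul]

section Split

variable {n m : ℕ}

/-- `calRank y i` and `testRank y i` are the `R_i^c` and `R_i^t` of the statement: the first `n`
coordinates are the calibration sample, the last `m` the test sample. -/
noncomputable def calRank (y : Fin (n + m) → ℝ) (i : Fin n) : ℕ :=
  #(univ.filter fun j : Fin n => y (Fin.castAdd m j) ≤ y (Fin.castAdd m i))

noncomputable def testRank (y : Fin (n + m) → ℝ) (i : Fin n) : ℕ :=
  #(univ.filter fun j : Fin m => y (Fin.natAdd n j) ≤ y (Fin.castAdd m i))

def calibIdx (m : ℕ) (i : Fin n) : Finset (Fin (n + m)) :=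
  (univ.map (Fin.castAddEmb m)).erase (Fin.castAdd m i)

def testIdx (n m : ℕ) : Finset (Fin (n + m)) := univ.map (Fin.natAddEmb n)

theorem calibIdx_union_testIdx (i : Fin n) :
    calibIdx m i ∪ testIdx n m = univ.erase (Fin.castAdd m i) := by
  ext x
  induction x using Fin.addCases <;> simp [calibIdx, testIdx, eq_comm, Fin.castAdd_ne_natAdd]

theorem disjoint_calibIdx_testIdx (i : Fin n) : Disjoint (calibIdx m i) (testIdx n m) := by
  rw [disjoint_left]
  intro x hx hx'
  obtain ⟨a, -, rfl⟩ := mem_map.1 (mem_of_mem_erase hx)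
  obtain ⟨b, -, h⟩ := mem_map.1 hx'
  exact Fin.castAdd_ne_natAdd a b h.symm

theorem card_calibIdx (i : Fin n) : #(calibIdx m i) = n - 1 := by
  simp [calibIdx, card_erase_of_mem]

theorem card_testIdx : #(testIdx n m) = m := by
  simp [testIdx]

theorem calRank_eq_card_below_comp (y : Fin (n + m) → ℝ) (i : Fin n) :
    calRank y i = #(below (y ∘ Fin.castAdd m) i) + 1 :=
  card_filter_le_eq_card_below_add_one _ i

theorem calRank_eq_card_below_inter (y : Fin (n + m) → ℝ) (i : Fin n) :
    calRank y i = #(below y (Fin.castAdd m i) ∩ calibIdx m i) + 1 := by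
  rw [calRank_eq_card_below_comp]
  exact congrArg (· + 1) (card_below_comp_embedding y (Fin.castAddEmb m) i)

theorem testRank_eq_card_below_inter (y : Fin (n + m) → ℝ) (i : Fin n) :
    testRank y i = #(below y (Fin.castAdd m i) ∩ testIdx n m) :=
  card_filter_comp_le_eq_card_below_inter y (Fin.natAddEmb n)
    (by simp [(Fin.castAdd_ne_natAdd _ _).symm])

theorem measurableSet_calRank_eq (i : Fin n) (r : ℕ) :
    MeasurableSet {y : Fin (n + m) → ℝ | calRank y i = r} := by
  simp only [calRank_eq_card_below_inter]
  exact measurableSet_setOf_below _ fun S => #(S ∩ calibIdx m i) + 1 = r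

theorem measurableSet_testRank_eq (i : Fin n) (k : ℕ) :
    MeasurableSet {y : Fin (n + m) → ℝ | testRank y i = k} := by
  simp only [testRank_eq_card_below_inter]
  exact measurableSet_setOf_below _ fun S => #(S ∩ testIdx n m) = k

variable {ν : Measure (Fin (n + m) → ℝ)} [IsProbabilityMeasure ν]

theorem IsExchangeable.measure_calRank_eq (hν : IsExchangeable ν)
    (hinj : ∀ᵐ y ∂ν, Function.Injective y) (i : Fin n) {r : ℕ} (hr : 1 ≤ r) (hrn : r ≤ n) :
    ν {y | calRank y i = r} = (n : ℝ≥0∞)⁻¹ := by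
  have hmeas : Measurable fun y : Fin (n + m) → ℝ => y ∘ Fin.castAddEmb m := by fun_prop
  have : IsProbabilityMeasure (ν.map fun y => y ∘ Fin.castAddEmb m) :=
    Measure.isProbabilityMeasure_map hmeas.aemeasurable
  have h := (hν.map_comp_embedding (Fin.castAddEmb m)).measure_card_below_eq_inv_card
    (ae_injective_map_comp_embedding hinj (Fin.castAddEmb m)) i (s := r - 1)
    (by simp only [Fintype.card_fin]; omega)
  rw [Measure.map_apply hmeas (measurableSet_setOf_below i (fun S => #S = r - 1)),
    Fintype.card_fin, Fin.coe_castAddEmb] at h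
  rw [← h]
  congr 1
  ext y
  simp only [Set.mem_ofPred_eq, Set.mem_preimage, calRank_eq_card_below_comp]
  omega

theorem IsExchangeable.measure_calRank_eq_inter_testRank_eq (hν : IsExchangeable ν)
    (hinj : ∀ᵐ y ∂ν, Function.Injective y) (i : Fin n) {r k : ℕ} (hr : 1 ≤ r) :
    ν ({y | calRank y i = r} ∩ {y | testRank y i = k})
      = (((n - 1).choose (r - 1) * m.choose k : ℕ) : ℝ≥0∞)
        * (((n + m : ℕ) : ℝ≥0∞) * (n + m - 1).choose (r - 1 + k))⁻¹ := by
  have h := hν.measure_card_below_inter_eq hinj (disjoint_calibIdx_testIdx i)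
    (calibIdx_union_testIdx i) (r - 1) k
  rw [card_calibIdx, card_testIdx, Fintype.card_fin] at h
  rw [← h]
  congr 1
  ext y
  simp only [Set.mem_inter_iff, Set.mem_ofPred_eq, calRank_eq_card_below_inter,
    testRank_eq_card_below_inter]
  omega

theorem IsExchangeable.cond_testRank_eq (hν : IsExchangeable ν)
    (hinj : ∀ᵐ y ∂ν, Function.Injective y) (i : Fin n) {r k : ℕ} (hr : 1 ≤ r) (hrn : r ≤ n)
    (hk : k ≤ m) :
    ν[|{y | calRank y i = r}] {y | testRank y i = k}
      = ((r + k - 1).choose k : ℝ≥0∞) * (n + m - r - k).choose (m - k) / (n + m).choose m := by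
  have hD : (n + m) * (n + m - 1).choose (r - 1 + k) ≠ 0 :=
    Nat.mul_ne_zero (by omega) (Nat.choose_pos (by omega)).ne'
  rw [cond_apply (measurableSet_calRank_eq i r), hν.measure_calRank_eq hinj i hr hrn,
    hν.measure_calRank_eq_inter_testRank_eq hinj i hr, inv_inv, ← div_eq_mul_inv,
    ← mul_div_assoc, ENNReal.div_eq_div_iff (by exact_mod_cast (Nat.choose_pos (by omega)).ne')
      (ENNReal.natCast_ne_top _) (by exact_mod_cast hD)
      (ENNReal.mul_ne_top (ENNReal.natCast_ne_top _) (ENNReal.natCast_ne_top _))]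
  exact_mod_cast Nat.choose_mul_choose_mul_eq_negHypergeometric hr hrn hk

end Split

end RankStatistics

open RankStatistics

theorem stmt2_general (n m : ℕ) (N : ℕ) (hN : N = n + m)
    {Ω : Type*} [MeasurableSpace Ω] (μ : Measure Ω) [IsProbabilityMeasure μ]
    (Y : Ω → Fin (n + m) → ℝ) (hY : Measurable Y)
    (hexch : ∀ π : Equiv.Perm (Fin (n + m)),
      Measure.map (fun ω i => Y ω (π i)) μ = Measure.map Y μ)
    (hdistinct : ∀ᵐ ω ∂μ, ∀ i j : Fin (n + m), i ≠ j → Y ω i ≠ Y ω j)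
    (Rc : Ω → Fin n → ℕ)
    (hRc : ∀ ω i, Rc ω i = (Finset.univ.filter
        (fun j : Fin n => Y ω (Fin.castAdd m j) ≤ Y ω (Fin.castAdd m i))).card)
    (Rt : Ω → Fin n → ℕ)
    (hRt : ∀ ω i, Rt ω i = (Finset.univ.filter
        (fun j : Fin m => Y ω (Fin.natAdd n j) ≤ Y ω (Fin.castAdd m i))).card)
    (i : Fin n) (r : ℕ) (hr1 : 1 ≤ r) (hrn : r ≤ n)
    (k : ℕ) (hk : k ≤ m) :
    μ[|{ω | Rc ω i = r}] {ω | Rt ω i = k}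
      = ((Nat.choose (r + k - 1) k : ENNReal) * (Nat.choose (N - r - k) (m - k) : ENNReal))
          / (Nat.choose N m : ENNReal) := by
  subst hN
  have : IsProbabilityMeasure (μ.map Y) := Measure.isProbabilityMeasure_map hY.aemeasurable
  have hν : IsExchangeable (μ.map Y) := fun π => by
    rw [Measure.map_map (by fun_prop) hY]
    exact hexch π
  have hinj : ∀ᵐ y ∂μ.map Y, Function.Injective y :=
    (ae_map_iff hY.aemeasurable measurableSet_injective).2
      (hdistinct.mono fun ω h a b => not_imp_not.1 (h a b))
  have hRc' : {ω | Rc ω i = r} = Y ⁻¹' {y | calRank y i = r} := by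
    ext ω
    simp [hRc, calRank]
  have hRt' : {ω | Rt ω i = k} = Y ⁻¹' {y | testRank y i = k} := by
    ext ω
    simp [hRt, testRank]
  rw [hRc', hRt', ← cond_map_apply hY (measurableSet_calRank_eq i r)
    (measurableSet_testRank_eq i k)]
  exact hν.cond_testRank_eq hinj i hr1 hrn hk

/-- For exchangeable a.s.-distinct real random variables `Y_1, …, Y_{n+m}`,
conditionally on the relative rank `R_i^c = r` of a calibration item `i ∈ {1,…,n}`
among the first `n` coordinates, the number `R_i^t` of the last `m` coordinates with
value below `Y_i` follows the Negative Hypergeometric distribution with parameters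
`(N, m, r)`, where `N = n + m`. -/
theorem stmt2 (n m : ℕ) (hn : 1 ≤ n) (hm : 1 ≤ m) (N : ℕ) (hN : N = n + m)
    {Ω : Type*} [MeasurableSpace Ω] (μ : Measure Ω) [IsProbabilityMeasure μ]
    (Y : Ω → Fin (n + m) → ℝ) (hY : Measurable Y)
    (hexch : ∀ π : Equiv.Perm (Fin (n + m)),
      Measure.map (fun ω i => Y ω (π i)) μ = Measure.map Y μ)
    (hdistinct : ∀ᵐ ω ∂μ, ∀ i j : Fin (n + m), i ≠ j → Y ω i ≠ Y ω j)
    (Rc : Ω → Fin n → ℕ)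
    (hRc : ∀ ω i, Rc ω i = (Finset.univ.filter
        (fun j : Fin n => Y ω (Fin.castAdd m j) ≤ Y ω (Fin.castAdd m i))).card)
    (Rt : Ω → Fin n → ℕ)
    (hRt : ∀ ω i, Rt ω i = (Finset.univ.filter
        (fun j : Fin m => Y ω (Fin.natAdd n j) ≤ Y ω (Fin.castAdd m i))).card)
    (i : Fin n) (r : ℕ) (hr1 : 1 ≤ r) (hrn : r ≤ n)
    (hpos : 0 < μ {ω | Rc ω i = r})
    (k : ℕ) (hk : k ≤ m) :
    μ[|{ω | Rc ω i = r}] {ω | Rt ω i = k}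
      = ((Nat.choose (r + k - 1) k : ENNReal) * (Nat.choose (N - r - k) (m - k) : ENNReal))
          / (Nat.choose N m : ENNReal) :=
  stmt2_general n m N hN μ Y hY hexch hdistinct Rc hRc Rt hRt i r hr1 hrn k hk
end

section
/- Let 0 < δ < α < 1 and let n ≥ 1. Let F_1, …, F_n : ℝ → ℝ be nondecreasing functions with values in [0, 1], and let p_1, …, p_n be real numbers such that F_i(p_i) ≥ 1 - δ for every i. Let F = (1/n)·∑_{i=1}^n F_i, let T be the ⌈n(1-α+δ)⌉-th order statistic of (p_1, …, p_n), and let q = inf{x ∈ ℝ : F(x) ≥ 1 - α}. Then F(T) ≥ (1-α+δ)(1-δ) > 1 - α, and consequently q ≤ T. -/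
/-!
At least `k = ⌈n(1-α+δ)⌉` of the points `p_i` lie at or below their `k`-th order statistic `T`,
and for each of them monotonicity gives `F_i T ≥ F_i p_i ≥ 1 - δ`. Since the remaining `F_i` are
nonnegative, `n · F T ≥ k (1 - δ) ≥ n (1-α+δ)(1-δ)`, and this exceeds `n (1 - α)` by `n δ (α - δ)`.
So `T` belongs to the set whose infimum is `q`.
-/

/-- The `k`-th order statistic (1-indexed, counting multiplicity) of a tuple of reals,
with junk value `0` if `k` is out of range. -/
noncomputable def orderStat {n : ℕ} (p : Fin n → ℝ) (k : ℕ) : ℝ :=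
  (Multiset.sort (Multiset.map p Finset.univ.val) (· ≤ ·)).getD (k - 1) 0

open Finset

theorem List.Pairwise.succ_le_countP_le_getElem {α : Type*} [LinearOrder α] {l : List α}
    (hl : l.Pairwise (· ≤ ·)) {i : ℕ} (hi : i < l.length) :
    i + 1 ≤ l.countP (· ≤ l[i]) := by
  have htake : (l.take (i + 1)).countP (· ≤ l[i]) = i + 1 := by
    rw [List.countP_eq_length.2, List.length_take, min_eq_left hi]
    intro a ha
    obtain ⟨j, hj, rfl⟩ := List.mem_take_iff_getElem.1 ha
    simpa using hl.rel_get_of_le (a := ⟨j, by omega⟩) (b := ⟨i, hi⟩) (Fin.mk_le_mk.2 (by omega))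
  exact htake.ge.trans (List.take_sublist _ _).countP_le

theorem le_card_filter_le_orderStat {n : ℕ} (p : Fin n → ℝ) {k : ℕ} (hk : 1 ≤ k) (hkn : k ≤ n) :
    k ≤ #{i | p i ≤ orderStat p k} := by
  set l := Multiset.sort (Multiset.map p univ.val) (· ≤ ·)
  have hlen : l.length = n := by simp [l]
  have hT : orderStat p k = l[k - 1] := List.getD_eq_getElem _ _ _
  have := (Multiset.pairwise_sort _ _).succ_le_countP_le_getElem (l := l) (i := k - 1) (by omega)
  rw [← hT, Nat.sub_add_cancel hk] at this
  refine this.trans_eq ?_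
  rw [← Multiset.coe_countP, Multiset.sort_eq, Multiset.countP_map]
  simp [Finset.card, Finset.filter]

theorem natCast_mul_le_sum_of_le_card_filter {ι : Type*} [Fintype ι] {f : ι → ℝ} {c : ℝ} {k : ℕ}
    (hf : ∀ i, 0 ≤ f i) (hc : 0 ≤ c) (hk : k ≤ #{i | c ≤ f i}) : k * c ≤ ∑ i, f i :=
  calc k * c ≤ #{i | c ≤ f i} * c := by gcongr
    _ = #{i | c ≤ f i} • c := (nsmul_eq_mul _ _).symm
    _ ≤ ∑ i ∈ {i | c ≤ f i}, f i := card_nsmul_le_sum _ _ _ fun i hi => (mem_filter.1 hi).2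
    _ ≤ ∑ i, f i := sum_le_sum_of_subset_of_nonneg (subset_univ _) fun i _ _ => hf i

/-- Lemma A.1 of the paper: for nondecreasing `[0,1]`-valued functions `F_1, …, F_n`,
points `p_i` with `F_i (p_i) ≥ 1 - δ`, the mixture `F = (1/n) ∑ F_i`, the
`⌈n(1-α+δ)⌉`-th order statistic `T` of the `p_i`, and `q = inf {x | F x ≥ 1 - α}`,
one has `F T ≥ (1-α+δ)(1-δ) > 1 - α` and hence `q ≤ T`. -/
theorem stmt4 (n : ℕ) (hn : 1 ≤ n) (α δ : ℝ) (hδ0 : 0 < δ) (hδα : δ < α) (hα1 : α < 1)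
    (F : Fin n → ℝ → ℝ) (hmono : ∀ i, Monotone (F i))
    (hrange : ∀ i x, F i x ∈ Set.Icc (0 : ℝ) 1)
    (p : Fin n → ℝ) (hp : ∀ i, 1 - δ ≤ F i (p i))
    (Fbar : ℝ → ℝ) (hFbar : ∀ x, Fbar x = (1 / (n : ℝ)) * ∑ i, F i x)
    (T : ℝ) (hT : T = orderStat p ⌈(n : ℝ) * (1 - α + δ)⌉₊)
    (q : EReal) (hq : q = sInf (Real.toEReal '' {x : ℝ | 1 - α ≤ Fbar x})) :
    (1 - α + δ) * (1 - δ) ≤ Fbar T ∧ 1 - α < (1 - α + δ) * (1 - δ) ∧ q ≤ (T : EReal) := by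
  set k := ⌈(n : ℝ) * (1 - α + δ)⌉₊
  have hn0 : (0 : ℝ) < n := by exact_mod_cast hn
  have hk_pos : 1 ≤ k := Nat.ceil_pos.2 (by nlinarith)
  have hk_le : k ≤ n := Nat.ceil_le.2 (by nlinarith)
  have hcount : k ≤ #{i | 1 - δ ≤ F i T} := by
    refine (le_card_filter_le_orderStat p hk_pos hk_le).trans (card_le_card fun i hi => ?_)
    simp only [mem_filter, mem_univ, true_and, ← hT] at hi ⊢
    exact (hp i).trans (hmono i hi)
  have hsum := natCast_mul_le_sum_of_le_card_filter (fun i => (hrange i T).1) (by linarith) hcount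
  have hFT : (1 - α + δ) * (1 - δ) ≤ Fbar T := by
    rw [hFbar, one_div, inv_mul_eq_div, le_div_iff₀ hn0]
    calc (1 - α + δ) * (1 - δ) * n = n * (1 - α + δ) * (1 - δ) := by ring
      _ ≤ k * (1 - δ) := mul_le_mul_of_nonneg_right (Nat.le_ceil _) (by linarith)
      _ ≤ ∑ i, F i T := hsum
  have hstrict : 1 - α < (1 - α + δ) * (1 - δ) := by nlinarith
  exact ⟨hFT, hstrict, hq ▸ sInf_le ⟨T, hstrict.le.trans hFT, rfl⟩⟩
end

section
/- Let n ≥ 1 and α ∈ (0, 1) be such that k := ⌈(n+1)(1-α)⌉ ≤ n. Let S̃_1, …, S̃_n, S' be real random variables whose joint law is exchangeable, and let s* be the k-th order statistic of (S̃_1, …, S̃_n). Then P(S' ≤ s*) ≥ 1 - α. -/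
/-!
Call a coordinate of `(S̃_1, …, S̃_n, S')` *low* if fewer than `k` coordinates lie strictly below
it. Whatever the values, at least `k` of the `n + 1` coordinates are low (the smallest coordinate
that is not low has only low coordinates below it), and by exchangeability every coordinate is low
with the same probability; hence `S'` is low with probability at least `k / (n + 1) ≥ 1 - α`.
When `S'` is low, fewer than `k` of the `S̃_i` lie below it, so `S' ≤ s*`.
-/

open MeasureTheory

open Finset ENNReal

section StrictRank

variable {ι α : Type*} [Fintype ι] [LinearOrder α]

def strictRank (z : ι → α) (i : ι) : ℕ := #{j | z j < z i}

lemma strictRank_comp_perm (z : ι → α) (π : Equiv.Perm ι) (i : ι) :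
    strictRank (z ∘ π) i = strictRank z (π i) :=
  card_bij' (fun j _ => π j) (fun j _ => π.symm j) (by simp) (by simp) (by simp) (by simp)

lemma le_card_strictRank_lt (z : ι → α) {k : ℕ} (hk : k ≤ Fintype.card ι) :
    k ≤ #{i | strictRank z i < k} := by
  set high : Finset ι := {i | k ≤ strictRank z i}
  rcases high.eq_empty_or_nonempty with hempty | hne
  · have hall (i : ι) : strictRank z i < k := by
      by_contra! hi
      have : i ∈ high := mem_filter.mpr ⟨mem_univ i, hi⟩
      rw [hempty] at this
      exact notMem_empty i this
    rwa [filter_true_of_mem fun i _ => hall i, card_univ]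
  · obtain ⟨i₀, hi₀, hmin⟩ := high.exists_min_image z hne
    calc k ≤ strictRank z i₀ := (mem_filter.mp hi₀).2
      _ ≤ #{i | strictRank z i < k} := card_le_card fun j hj => by
        simp only [mem_filter, mem_univ, true_and] at hj ⊢
        by_contra! hkj
        exact (hmin j (by simpa [high] using hkj)).not_gt hj

lemma strictRank_last {n : ℕ} (z : Fin (n + 1) → α) :
    strictRank z (Fin.last n) = #{j : Fin n | z j.castSucc < z (Fin.last n)} := by
  simp only [strictRank, card_filter, Fin.sum_univ_castSucc, lt_irrefl, if_false, add_zero]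

end StrictRank

lemma List.Pairwise.succ_le_countP_lt {α : Type*} [LinearOrder α] {l : List α}
    (hl : l.Pairwise (· ≤ ·)) {i : ℕ} (hi : i < l.length) {x : α} (hx : l[i] < x) :
    i + 1 ≤ l.countP (· < x) := by
  calc i + 1 = (l.take (i + 1)).countP (· < x) := by
        rw [List.countP_eq_length.mpr, List.length_take]
        · omega
        · intro y hy
          obtain ⟨j, hj, rfl⟩ := List.mem_take_iff_getElem.mp hy
          exact decide_eq_true ((hl.rel_get_of_le (a := ⟨j, by omega⟩) (b := ⟨i, hi⟩)
            (by simp; omega)).trans_lt hx)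
    _ ≤ l.countP (· < x) := (List.take_sublist _ _).countP_le

lemma le_orderStat_of_card_lt {n : ℕ} (p : Fin n → ℝ) {x : ℝ} {k : ℕ} (hkn : k ≤ n)
    (h : #{j | p j < x} < k) : x ≤ orderStat p k := by
  set l := Multiset.sort (Multiset.map p univ.val) (· ≤ ·)
  have hlen : l.length = n := by simp [l]
  have hcount : l.countP (· < x) = #{j | p j < x} := by
    rw [← Multiset.coe_countP, Multiset.sort_eq, Multiset.countP_map]
    rfl
  by_contra! hlt
  have hi : k - 1 < l.length := by omega
  have : k - 1 + 1 ≤ l.countP (· < x) := (Multiset.pairwise_sort _ _).succ_le_countP_lt hi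
    (by rwa [orderStat, List.getD_eq_getElem _ _ hi] at hlt)
  omega

lemma last_le_orderStat_of_strictRank_lt {n : ℕ} (z : Fin (n + 1) → ℝ) {k : ℕ} (hkn : k ≤ n)
    (h : strictRank z (Fin.last n) < k) :
    z (Fin.last n) ≤ orderStat (fun i => z i.castSucc) k :=
  le_orderStat_of_card_lt _ hkn (strictRank_last z ▸ h)

section Exchangeable

variable {Ω ι : Type*} [MeasurableSpace Ω] {μ : Measure Ω} {Y : Ω → ι → ℝ}

lemma measure_preimage_comp_perm (hY : Measurable Y)
    (hexch : ∀ π : Equiv.Perm ι, μ.map (fun ω i => Y ω (π i)) = μ.map Y)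
    (π : Equiv.Perm ι) {B : Set (ι → ℝ)} (hB : MeasurableSet B) :
    μ ((fun ω i => Y ω (π i)) ⁻¹' B) = μ (Y ⁻¹' B) := by
  have hYπ : Measurable fun ω i => Y ω (π i) :=
    measurable_pi_lambda _ fun i => (measurable_pi_apply (π i)).comp hY
  rw [← Measure.map_apply hYπ hB, hexch, Measure.map_apply hY hB]

variable [Fintype ι]

lemma measurableSet_strictRank_lt (i : ι) (k : ℕ) :
    MeasurableSet {z : ι → ℝ | strictRank z i < k} := by
  have : Measurable fun z : ι → ℝ => strictRank z i := by
    simp only [strictRank, card_filter]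
    exact Finset.measurable_sum _ fun j _ => Measurable.ite
      (measurableSet_lt (measurable_pi_apply j) (measurable_pi_apply i))
      measurable_const measurable_const
  exact this (MeasurableSet.of_discrete (s := {m | m < k}))

lemma measure_strictRank_lt_eq (hY : Measurable Y)
    (hexch : ∀ π : Equiv.Perm ι, μ.map (fun ω i => Y ω (π i)) = μ.map Y) (k : ℕ) (i j : ι) :
    μ {ω | strictRank (Y ω) i < k} = μ {ω | strictRank (Y ω) j < k} := by
  classical
  have hswap : {ω | strictRank (Y ω) i < k} =
      (fun ω l => Y ω (Equiv.swap i j l)) ⁻¹' {z | strictRank z j < k} := by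
    ext ω
    simp [← Function.comp_def, strictRank_comp_perm]
  rw [hswap, measure_preimage_comp_perm hY hexch _ (measurableSet_strictRank_lt j k)]
  rfl

open Classical in
lemma natCast_le_sum_measure [IsProbabilityMeasure μ] {E : ι → Set Ω}
    (hE : ∀ i, MeasurableSet (E i)) {k : ℕ} (h : ∀ ω, k ≤ #{i | ω ∈ E i}) :
    (k : ℝ≥0∞) ≤ ∑ i, μ (E i) := by
  calc (k : ℝ≥0∞) = ∫⁻ _, (k : ℝ≥0∞) ∂μ := by simp
    _ ≤ ∫⁻ ω, ∑ i, (E i).indicator 1 ω ∂μ := lintegral_mono fun ω => by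
        simp only [Set.indicator_apply, Pi.one_apply]
        exact_mod_cast card_filter (ω ∈ E ·) _ ▸ h ω
    _ = ∑ i, μ (E i) := by
        rw [lintegral_finsetSum _ fun i _ => measurable_one.indicator (hE i)]
        simp_rw [lintegral_indicator_one (hE _)]

lemma natCast_le_card_mul_measure_strictRank_lt [IsProbabilityMeasure μ] (hY : Measurable Y)
    (hexch : ∀ π : Equiv.Perm ι, μ.map (fun ω i => Y ω (π i)) = μ.map Y)
    {k : ℕ} (hk : k ≤ Fintype.card ι) (i : ι) :
    (k : ℝ≥0∞) ≤ Fintype.card ι * μ {ω | strictRank (Y ω) i < k} := by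
  calc (k : ℝ≥0∞) ≤ ∑ j, μ {ω | strictRank (Y ω) j < k} :=
        natCast_le_sum_measure (fun j => hY (measurableSet_strictRank_lt j k))
          fun ω => by convert le_card_strictRank_lt (Y ω) hk; exact Iff.rfl
    _ = Fintype.card ι * μ {ω | strictRank (Y ω) i < k} := by
        simp [measure_strictRank_lt_eq hY hexch k _ i]

end Exchangeable

theorem stmt9_general (n : ℕ) (α : ℝ)
    (k : ℕ) (hk : k = ⌈((n : ℝ) + 1) * (1 - α)⌉₊) (hkn : k ≤ n)
    {Ω : Type*} [MeasurableSpace Ω] (μ : Measure Ω) [IsProbabilityMeasure μ]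
    (Y : Ω → Fin (n + 1) → ℝ) (hY : Measurable Y)
    (hexch : ∀ π : Equiv.Perm (Fin (n + 1)),
      Measure.map (fun ω i => Y ω (π i)) μ = Measure.map Y μ) :
    1 - α ≤ (μ {ω | Y ω (Fin.last n)
        ≤ orderStat (fun i : Fin n => Y ω (Fin.castSucc i)) k}).toReal := by
  set T := {ω | Y ω (Fin.last n) ≤ orderStat (fun i : Fin n => Y ω (Fin.castSucc i)) k}
  have hrank := natCast_le_card_mul_measure_strictRank_lt hY hexch
    (show k ≤ Fintype.card (Fin (n + 1)) by simp; omega) (Fin.last n)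
  have hsub : {ω | strictRank (Y ω) (Fin.last n) < k} ⊆ T := fun ω hω =>
    last_le_orderStat_of_strictRank_lt (Y ω) hkn hω
  have hT : (k : ℝ) ≤ (n + 1) * μ.real T := by
    have := ENNReal.toReal_mono (by finiteness)
      (hrank.trans (mul_le_mul_of_nonneg_left (measure_mono hsub) zero_le))
    simpa [measureReal_def, ENNReal.toReal_add] using this
  have hceil : ((n : ℝ) + 1) * (1 - α) ≤ k := hk ▸ Nat.le_ceil _
  exact le_of_mul_le_mul_left (hceil.trans hT) (by positivity)

/-- Marginal validity of MDCR: if `S̃_1, …, S̃_n, S'` (encoded as the coordinates of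
`Y : Ω → Fin (n+1) → ℝ`, with `S'` the last coordinate) are exchangeable and `s*` is the
`k`-th order statistic of `(S̃_1, …, S̃_n)` with `k = ⌈(n+1)(1-α)⌉ ≤ n`, then
`P(S' ≤ s*) ≥ 1 - α`. -/
theorem stmt9 (n : ℕ) (hn : 1 ≤ n) (α : ℝ) (hα0 : 0 < α) (hα1 : α < 1)
    (k : ℕ) (hk : k = ⌈((n : ℝ) + 1) * (1 - α)⌉₊) (hkn : k ≤ n)
    {Ω : Type*} [MeasurableSpace Ω] (μ : Measure Ω) [IsProbabilityMeasure μ]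
    (Y : Ω → Fin (n + 1) → ℝ) (hY : Measurable Y)
    (hexch : ∀ π : Equiv.Perm (Fin (n + 1)),
      Measure.map (fun ω i => Y ω (π i)) μ = Measure.map Y μ) :
    1 - α ≤ (μ {ω | Y ω (Fin.last n)
        ≤ orderStat (fun i : Fin n => Y ω (Fin.castSucc i)) k}).toReal :=
  stmt9_general n α k hk hkn μ Y hY hexch
end

section
/- Let n, m ≥ 1, α ∈ (0, 1), and C > 0. On a probability space, let F_cal(ω, ·), F_test(ω, ·), and F_N(ω, ·) be random functions from ℝ to [0, 1], and suppose that for every ε > 0: P(sup_{t ∈ ℝ} |F_cal(t) - F_N(t)| > ε) ≤ 2·exp(-C·n·ε²) and P(sup_{t ∈ ℝ} |F_test(t) - F_N(t)| > ε) ≤ 2·exp(-C·m·ε²). Let s* be a random real number such that F_cal(s*) ≥ 1 - α almost surely, and define FCP := 1 - F_test(s*). Then for every β ∈ (0, 1), with probability at least 1 - β, FCP ≤ α + √(ln(4/β)/(C·n)) + √(ln(4/β)/(C·m)). -/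
open MeasureTheory

/-- Finite-sample FCP concentration (Theorem 4 of the paper): if the random empirical
CDFs `F_cal` and `F_test` of the calibration and test scores satisfy DKW-type tail
bounds `P(sup_t |F_cal t - F_N t| > ε) ≤ 2 exp(-C n ε²)` and
`P(sup_t |F_test t - F_N t| > ε) ≤ 2 exp(-C m ε²)` around the pooled CDF `F_N`, and the
conformal threshold `s*` satisfies `F_cal s* ≥ 1 - α` a.s., then for every
`β ∈ (0, 1)`, with probability at least `1 - β`,
`FCP := 1 - F_test s* ≤ α + √(ln(4/β)/(C n)) + √(ln(4/β)/(C m))`. -/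
theorem stmt12 (n m : ℕ) (hn : 1 ≤ n) (hm : 1 ≤ m) (α : ℝ) (hα0 : 0 < α) (hα1 : α < 1)
    (C : ℝ) (hC : 0 < C)
    {Ω : Type*} [MeasurableSpace Ω] (μ : Measure Ω) [IsProbabilityMeasure μ]
    (Fcal Ftest FN : Ω → ℝ → ℝ)
    (hFcal01 : ∀ ω t, Fcal ω t ∈ Set.Icc (0 : ℝ) 1)
    (hFtest01 : ∀ ω t, Ftest ω t ∈ Set.Icc (0 : ℝ) 1)
    (hFN01 : ∀ ω t, FN ω t ∈ Set.Icc (0 : ℝ) 1)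
    (hcal : ∀ ε : ℝ, 0 < ε →
      μ {ω | ∃ t : ℝ, ε < |Fcal ω t - FN ω t|}
        ≤ ENNReal.ofReal (2 * Real.exp (-C * n * ε ^ 2)))
    (htest : ∀ ε : ℝ, 0 < ε →
      μ {ω | ∃ t : ℝ, ε < |Ftest ω t - FN ω t|}
        ≤ ENNReal.ofReal (2 * Real.exp (-C * m * ε ^ 2)))
    (sstar : Ω → ℝ)
    (hsstar : ∀ᵐ ω ∂μ, 1 - α ≤ Fcal ω (sstar ω)) :
    ∀ β : ℝ, 0 < β → β < 1 →
      1 - β ≤ (μ {ω | 1 - Ftest ω (sstar ω)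
          ≤ α + Real.sqrt (Real.log (4 / β) / (C * n))
            + Real.sqrt (Real.log (4 / β) / (C * m))}).toReal := by

  intro β hβ0 hβ1
  set ε₁ := Real.sqrt (Real.log (4 / β) / (C * n)) with hε₁def
  set ε₂ := Real.sqrt (Real.log (4 / β) / (C * m)) with hε₂def
  have hn' : (0:ℝ) < n := by exact_mod_cast Nat.lt_of_lt_of_le Nat.zero_lt_one hn
  have hm' : (0:ℝ) < m := by exact_mod_cast Nat.lt_of_lt_of_le Nat.zero_lt_one hm
  have hlog : 0 < Real.log (4 / β) := by
    apply Real.log_pos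
    rw [lt_div_iff₀ hβ0]; linarith
  have hε₁pos : 0 < ε₁ := Real.sqrt_pos.mpr (div_pos hlog (mul_pos hC hn'))
  have hε₂pos : 0 < ε₂ := Real.sqrt_pos.mpr (div_pos hlog (mul_pos hC hm'))
  have hsq₁ : ε₁ ^ 2 = Real.log (4 / β) / (C * n) := by
    rw [hε₁def, Real.sq_sqrt (le_of_lt (div_pos hlog (mul_pos hC hn')))]
  have hsq₂ : ε₂ ^ 2 = Real.log (4 / β) / (C * m) := by
    rw [hε₂def, Real.sq_sqrt (le_of_lt (div_pos hlog (mul_pos hC hm')))]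
  have hexp₁ : 2 * Real.exp (-C * n * ε₁ ^ 2) = β / 2 := by
    rw [hsq₁]
    have : -C * n * (Real.log (4 / β) / (C * n)) = - Real.log (4 / β) := by
      field_simp
    rw [this, Real.exp_neg, Real.exp_log (by positivity)]
    field_simp; ring
  have hexp₂ : 2 * Real.exp (-C * m * ε₂ ^ 2) = β / 2 := by
    rw [hsq₂]
    have : -C * m * (Real.log (4 / β) / (C * m)) = - Real.log (4 / β) := by
      field_simp
    rw [this, Real.exp_neg, Real.exp_log (by positivity)]
    field_simp; ring
  have hA := hcal ε₁ hε₁pos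
  have hB := htest ε₂ hε₂pos
  rw [hexp₁] at hA
  rw [hexp₂] at hB
  set A := {ω | ∃ t : ℝ, ε₁ < |Fcal ω t - FN ω t|}
  set B := {ω | ∃ t : ℝ, ε₂ < |Ftest ω t - FN ω t|}
  set S := {ω | ¬ (1 - α ≤ Fcal ω (sstar ω))}
  have hS : μ S = 0 := by
    rw [Filter.eventually_iff] at hsstar
    exact hsstar
  set T := {ω | 1 - Ftest ω (sstar ω) ≤ α + ε₁ + ε₂}
  have hsub : Tᶜ ⊆ A ∪ B ∪ S := by
    intro ω hω
    by_contra hc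
    simp only [Set.mem_union, not_or] at hc
    obtain ⟨⟨hA', hB'⟩, hS'⟩ := hc
    apply hω
    have h1 : |Fcal ω (sstar ω) - FN ω (sstar ω)| ≤ ε₁ := by
      by_contra h; exact hA' ⟨sstar ω, lt_of_not_ge h⟩
    have h2 : |Ftest ω (sstar ω) - FN ω (sstar ω)| ≤ ε₂ := by
      by_contra h; exact hB' ⟨sstar ω, lt_of_not_ge h⟩
    have h3 : 1 - α ≤ Fcal ω (sstar ω) := not_not.mp hS'
    rw [abs_le] at h1 h2
    show 1 - Ftest ω (sstar ω) ≤ α + ε₁ + ε₂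
    linarith [h1.1, h1.2, h2.1, h2.2]
  have hTc : μ Tᶜ ≤ ENNReal.ofReal β := by
    calc μ Tᶜ ≤ μ (A ∪ B ∪ S) := measure_mono hsub
    _ ≤ μ (A ∪ B) + μ S := measure_union_le _ _
    _ ≤ (μ A + μ B) + μ S := by gcongr; exact measure_union_le _ _
    _ ≤ (ENNReal.ofReal (β/2) + ENNReal.ofReal (β/2)) + 0 := by
        rw [hS]; gcongr
    _ = ENNReal.ofReal β := by
        rw [add_zero, ← ENNReal.ofReal_add (by linarith) (by linarith)]
        norm_num
  have h1le : (1:ENNReal) ≤ μ T + ENNReal.ofReal β := by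
    calc (1:ENNReal) = μ Set.univ := (measure_univ (μ := μ)).symm
    _ = μ (T ∪ Tᶜ) := by rw [Set.union_compl_self]
    _ ≤ μ T + μ Tᶜ := measure_union_le _ _
    _ ≤ μ T + ENNReal.ofReal β := by gcongr
  have hTne : μ T ≠ ⊤ := measure_ne_top μ T
  rw [← ENNReal.ofReal_le_iff_le_toReal hTne]
  have : ENNReal.ofReal (1 - β) ≤ 1 - ENNReal.ofReal β := by
    rw [← ENNReal.ofReal_one, ← ENNReal.ofReal_sub _ (le_of_lt hβ0)]
  calc ENNReal.ofReal (1 - β) ≤ 1 - ENNReal.ofReal β := this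
  _ ≤ μ T := by
      rw [tsub_le_iff_right]
      exact h1le.trans (by rw [add_comm])
end
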